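/- Let T be a symplectic tableau, x ∈ [2n], and suppose T' := T ← x (Schensted insertion) is not symplectic. Let s be the minimal integer with T'(s,1) < 2s−1, and let T'' be the punctured tableau obtained from T' by replacing the (s−1,1)- and (s,1)-entries with holes. Then T ←ᴮ x = Rect(T''). -/

import Mathlib

open scoped Classical

/-- A partition recorded by its parts `λ_i = f i` for `i ≥ 1`. -/
def IsPartitionF (f : ℕ → ℕ) : Prop :=
  (∀ i j, 1 ≤ i → i ≤ j → f j ≤ f i) ∧ ∃ N, ∀ i, N < i → f i = 0

/-- The Young diagram `D(λ)` of a partition. -/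
def cells (f : ℕ → ℕ) : Set (ℕ × ℕ) := {p | 1 ≤ p.1 ∧ 1 ≤ p.2 ∧ p.2 ≤ f p.1}

/-- A punctured tableau of shape `(λ,H)`, recorded as a function `T : ℕ×ℕ → ℕ` which
takes positive values exactly on `D(λ,H) = D(λ) \ H` (and `0` elsewhere). -/
def PTab (f : ℕ → ℕ) (H : Set (ℕ × ℕ)) (T : ℕ × ℕ → ℕ) : Prop :=
  (∀ p, p ∉ cells f \ H → T p = 0) ∧ (∀ p ∈ cells f \ H, 1 ≤ T p)

/-- A semistandard punctured tableau: entries weakly increase along rows and strictly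
increase down columns (comparisons among filled cells). -/
def PSSYT (f : ℕ → ℕ) (H : Set (ℕ × ℕ)) (T : ℕ × ℕ → ℕ) : Prop :=
  PTab f H T ∧
  (∀ i j l, (i, j) ∈ cells f \ H → (i, l) ∈ cells f \ H → j < l → T (i, j) ≤ T (i, l)) ∧
  (∀ i k j, (i, j) ∈ cells f \ H → (k, j) ∈ cells f \ H → i < k → T (i, j) < T (k, j))

/-- The row-word: entries read left-to-right along rows, bottom row to top, skipping
holes; `N` is any bound on the number of rows. -/
noncomputable def rowWordP (f : ℕ → ℕ) (H : Set (ℕ × ℕ)) (T : ℕ × ℕ → ℕ) (N : ℕ) :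
    List ℕ :=
  ((List.range N).reverse.map (fun i =>
    ((((List.range (f (i + 1))).map (· + 1)).filter
        (fun j => decide ((i + 1, j) ∉ H))).map (fun j => T (i + 1, j))))).flatten

/-- The column-word: entries of each column read bottom-to-top, columns left to right,
skipping holes; `N` bounds the number of rows, `M` the number of columns. -/
noncomputable def colWordP (f : ℕ → ℕ) (H : Set (ℕ × ℕ)) (T : ℕ × ℕ → ℕ) (N M : ℕ) :
    List ℕ :=
  ((List.range M).map (fun j =>
    ((((List.range N).reverse.map (· + 1)).filter
        (fun i => decide ((i, j + 1) ∈ cells f \ H))).map (fun i => T (i, j + 1))))).flatten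

/-- Elementary Knuth transformations on three consecutive letters:
(K1) `yzx ↦ yxz` if `x < y ≤ z`; (K2) `xzy ↦ zxy` if `x ≤ y < z`. -/
inductive KnuthStep : List ℕ → List ℕ → Prop
  | K1 (a b : List ℕ) (x y z : ℕ) (h1 : x < y) (h2 : y ≤ z) :
      KnuthStep (a ++ y :: z :: x :: b) (a ++ y :: x :: z :: b)
  | K2 (a b : List ℕ) (x y z : ℕ) (h1 : x ≤ y) (h2 : y < z) :
      KnuthStep (a ++ x :: z :: y :: b) (a ++ z :: x :: y :: b)

/-- Knuth equivalence of words. -/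
def Knuth : List ℕ → List ℕ → Prop := Relation.EqvGen KnuthStep

/-- A hole `p ∈ H` is slidable if the cell to its right or below belongs to `D(λ,H)`. -/
def Slidable (f : ℕ → ℕ) (H : Set (ℕ × ℕ)) (p : ℕ × ℕ) : Prop :=
  p ∈ H ∧ ((p.1, p.2 + 1) ∈ cells f \ H ∨ (p.1 + 1, p.2) ∈ cells f \ H)

/-- A hole `p ∈ H` is reversely slidable if the cell to its left or above belongs to
`D(λ,H)`. -/
def RevSlidable (f : ℕ → ℕ) (H : Set (ℕ × ℕ)) (p : ℕ × ℕ) : Prop :=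
  p ∈ H ∧ ((p.1, p.2 - 1) ∈ cells f \ H ∨ (p.1 - 1, p.2) ∈ cells f \ H)

/-- Move the hole from `p` to the filled cell `q`: the entry at `q` moves into `p`, and
`q` becomes the new hole (set to `0`). -/
noncomputable def moveHole (H : Set (ℕ × ℕ)) (T : ℕ × ℕ → ℕ) (p q : ℕ × ℕ) :
    Set (ℕ × ℕ) × (ℕ × ℕ → ℕ) :=
  ((H \ {p}) ∪ {q}, Function.update (Function.update T p (T q)) q 0)

/-- One step of the Schützenberger sliding: the state is `(H, T, hole)`.  The hole moves
right if the entry to the right is strictly smaller than the entry below (or there is no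
entry below), and moves down otherwise (when there is an entry below). -/
def SlideStep (f : ℕ → ℕ) :
    (Set (ℕ × ℕ) × (ℕ × ℕ → ℕ) × (ℕ × ℕ)) → (Set (ℕ × ℕ) × (ℕ × ℕ → ℕ) × (ℕ × ℕ)) → Prop :=
  fun s t =>
    ((s.2.2.1, s.2.2.2 + 1) ∈ cells f \ s.1 ∧
      ((s.2.2.1 + 1, s.2.2.2) ∈ cells f \ s.1 →
        s.2.1 (s.2.2.1, s.2.2.2 + 1) < s.2.1 (s.2.2.1 + 1, s.2.2.2)) ∧
      t = ((moveHole s.1 s.2.1 s.2.2 (s.2.2.1, s.2.2.2 + 1)).1,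
           (moveHole s.1 s.2.1 s.2.2 (s.2.2.1, s.2.2.2 + 1)).2, (s.2.2.1, s.2.2.2 + 1)))
  ∨ ((s.2.2.1 + 1, s.2.2.2) ∈ cells f \ s.1 ∧
      ((s.2.2.1, s.2.2.2 + 1) ∈ cells f \ s.1 →
        s.2.1 (s.2.2.1 + 1, s.2.2.2) ≤ s.2.1 (s.2.2.1, s.2.2.2 + 1)) ∧
      t = ((moveHole s.1 s.2.1 s.2.2 (s.2.2.1 + 1, s.2.2.2)).1,
           (moveHole s.1 s.2.1 s.2.2 (s.2.2.1 + 1, s.2.2.2)).2, (s.2.2.1 + 1, s.2.2.2)))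

/-- One step of the reverse sliding: the hole moves left if the entry to the left is
strictly greater than the entry above (or there is no entry above), and moves up
otherwise (when there is an entry above). -/
def RevSlideStep (f : ℕ → ℕ) :
    (Set (ℕ × ℕ) × (ℕ × ℕ → ℕ) × (ℕ × ℕ)) → (Set (ℕ × ℕ) × (ℕ × ℕ → ℕ) × (ℕ × ℕ)) → Prop :=
  fun s t =>
    ((s.2.2.1, s.2.2.2 - 1) ∈ cells f \ s.1 ∧
      ((s.2.2.1 - 1, s.2.2.2) ∈ cells f \ s.1 →
        s.2.1 (s.2.2.1 - 1, s.2.2.2) < s.2.1 (s.2.2.1, s.2.2.2 - 1)) ∧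
      t = ((moveHole s.1 s.2.1 s.2.2 (s.2.2.1, s.2.2.2 - 1)).1,
           (moveHole s.1 s.2.1 s.2.2 (s.2.2.1, s.2.2.2 - 1)).2, (s.2.2.1, s.2.2.2 - 1)))
  ∨ ((s.2.2.1 - 1, s.2.2.2) ∈ cells f \ s.1 ∧
      ((s.2.2.1, s.2.2.2 - 1) ∈ cells f \ s.1 →
        s.2.1 (s.2.2.1, s.2.2.2 - 1) ≤ s.2.1 (s.2.2.1 - 1, s.2.2.2)) ∧
      t = ((moveHole s.1 s.2.1 s.2.2 (s.2.2.1 - 1, s.2.2.2)).1,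
           (moveHole s.1 s.2.1 s.2.2 (s.2.2.1 - 1, s.2.2.2)).2, (s.2.2.1 - 1, s.2.2.2)))

/-- `p` is the latest slidable hole with respect to the lexicographic order. -/
def LatestSlidable (f : ℕ → ℕ) (H : Set (ℕ × ℕ)) (p : ℕ × ℕ) : Prop :=
  Slidable f H p ∧ ∀ q, Slidable f H q → q.1 < p.1 ∨ (q.1 = p.1 ∧ q.2 ≤ p.2)

/-- `p` is the first reversely slidable hole with respect to the lexicographic order. -/
def FirstRevSlidable (f : ℕ → ℕ) (H : Set (ℕ × ℕ)) (p : ℕ × ℕ) : Prop :=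
  RevSlidable f H p ∧ ∀ q, RevSlidable f H q → p.1 < q.1 ∨ (p.1 = q.1 ∧ p.2 ≤ q.2)

/-- One step of the rectification: perform the full sliding `Sl(T;r,c)` at the latest
slidable hole `(r,c)`. -/
def RectStep (f : ℕ → ℕ) :
    (Set (ℕ × ℕ) × (ℕ × ℕ → ℕ)) → (Set (ℕ × ℕ) × (ℕ × ℕ → ℕ)) → Prop :=
  fun s t => ∃ p p', LatestSlidable f s.1 p ∧
    Relation.ReflTransGen (SlideStep f) (s.1, s.2, p) (t.1, t.2, p') ∧
    ¬ Slidable f t.1 p'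

/-- One step of the reverse rectification: perform the full reverse sliding at the first
reversely slidable hole. -/
def RevRectStep (f : ℕ → ℕ) :
    (Set (ℕ × ℕ) × (ℕ × ℕ → ℕ)) → (Set (ℕ × ℕ) × (ℕ × ℕ → ℕ)) → Prop :=
  fun s t => ∃ p p', FirstRevSlidable f s.1 p ∧
    Relation.ReflTransGen (RevSlideStep f) (s.1, s.2, p) (t.1, t.2, p') ∧
    ¬ RevSlidable f t.1 p'

/-- The data of the Schensted row-insertion of the letter `x` into the semistandard
tableau `T` of shape `f`: `r` is the number of rows visited, `c i` is the row-insertion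
route (the column where row `i` is modified), and `xs i` are the row-inserting letters.
`c i` is the least `j ≥ 1` with `T (i,j) > xs i`, where entries outside the diagram are
treated as `∞` (so `c i = f i + 1` when no entry of row `i` exceeds `xs i`); for
`i < r` the entry `T (i, c i)` is bumped into the next row, and the process stops at row
`r`, where the letter is appended at the end of the row. -/
def InsData (f : ℕ → ℕ) (T : ℕ × ℕ → ℕ) (x r : ℕ) (c xs : ℕ → ℕ) : Prop :=
  1 ≤ r ∧ xs 1 = x ∧
  (∀ i, 1 ≤ i → i ≤ r →
    1 ≤ c i ∧ c i ≤ f i + 1 ∧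
    (∀ j, 1 ≤ j → j < c i → T (i, j) ≤ xs i) ∧
    (c i ≤ f i → xs i < T (i, c i))) ∧
  (∀ i, 1 ≤ i → i < r → c i ≤ f i ∧ xs (i + 1) = T (i, c i)) ∧
  c r = f r + 1

/-- The tableau `T ← x` resulting from the row-insertion with route `c` and inserting
letters `xs`, terminating at row `r`. -/
def insResult (T : ℕ × ℕ → ℕ) (r : ℕ) (c xs : ℕ → ℕ) : ℕ × ℕ → ℕ :=
  fun p => if 1 ≤ p.1 ∧ p.1 ≤ r ∧ p.2 = c p.1 then xs p.1 else T p

/-- `add(λ,r)`: replace `λ_r` by `λ_r + 1`. -/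
def addRow (f : ℕ → ℕ) (r : ℕ) : ℕ → ℕ := Function.update f r (f r + 1)

/-- A symplectic (King) tableau: a semistandard tableau with `T(i,1) ≥ 2i - 1`. -/
def Symp (f : ℕ → ℕ) (T : ℕ × ℕ → ℕ) : Prop :=
  PSSYT f ∅ T ∧ ∀ i, 1 ≤ i → 1 ≤ f i → 2 * i - 1 ≤ T (i, 1)

/-- Entries bounded above by `m`. -/
def EntriesLE (f : ℕ → ℕ) (T : ℕ × ℕ → ℕ) (m : ℕ) : Prop :=
  ∀ p ∈ cells f, T p ≤ m

/-- `rm(λ,r)`: replace `λ_r` by `λ_r - 1`. -/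
def rmRow (f : ℕ → ℕ) (r : ℕ) : ℕ → ℕ := Function.update f r (f r - 1)

/-- The punctured tableau of shape `(ν, {(s-1,1)})` appearing in the Berele insertion
when the symplectic condition first fails at row `s`: the letters `xs i` have been
inserted in columns `c i` of rows `i ≤ s - 1`, and the cell `(s-1,1)` is a hole. -/
def bereleMid (T : ℕ × ℕ → ℕ) (s : ℕ) (c xs : ℕ → ℕ) : ℕ × ℕ → ℕ :=
  fun p => if p = (s - 1, 1) then 0
    else if 1 ≤ p.1 ∧ p.1 + 1 ≤ s ∧ p.2 = c p.1 then xs p.1 else T p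

/-- The Berele row-insertion `T ←ᴮ x` of `x` into the symplectic tableau `T` of shape
`f`, producing the symplectic tableau `S` of shape `g`, together with its terminal row
`ρ : ℕ ⊕ ℕ` (`Sum.inl r` is the unbarred row `r`, `Sum.inr k` is the barred row `k̄`).
Either the Schensted insertion never violates the symplectic bound `xs i ≥ 2i - 1`, in
which case `T ←ᴮ x = T ← x` adds a box in row `r`; or the bound first fails at row `s`,
in which case the insertion is stopped, the cell `(s-1,1)` becomes a hole, and the
resulting punctured tableau is rectified by the jeu de taquin sliding, removing a box
from the terminal row `k` of the slide. -/
def BereleT (f : ℕ → ℕ) (T : ℕ × ℕ → ℕ) (x : ℕ) (g : ℕ → ℕ) (S : ℕ × ℕ → ℕ)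
    (ρ : ℕ ⊕ ℕ) : Prop :=
  ∃ r c xs, InsData f T x r c xs ∧
    (((∀ i, 1 ≤ i → i ≤ r → 2 * i - 1 ≤ xs i) ∧
        g = addRow f r ∧ S = insResult T r c xs ∧ ρ = Sum.inl r) ∨
      (∃ s, 1 ≤ s ∧ s ≤ r ∧ xs s < 2 * s - 1 ∧
        (∀ i, 1 ≤ i → i < s → 2 * i - 1 ≤ xs i) ∧
        ∃ H' p', Relation.ReflTransGen (SlideStep f)
            ({((s : ℕ) - 1, 1)}, bereleMid T s c xs, (s - 1, 1)) (H', S, p') ∧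
          ¬ Slidable f H' p' ∧ g = rmRow f p'.1 ∧ ρ = Sum.inr p'.1))

/-- The Berele row-insertion relation `T ←ᴮ x = S`, with `g = sh(S)`. -/
def Berele (f : ℕ → ℕ) (T : ℕ × ℕ → ℕ) (x : ℕ) (g : ℕ → ℕ) (S : ℕ × ℕ → ℕ) : Prop :=
  ∃ ρ, BereleT f T x g S ρ

/-- `h` is obtained from `g` by adding one box. -/
def OneBox (g h : ℕ → ℕ) : Prop := ∃ r, 1 ≤ r ∧ h = addRow g r ∧ g r < h r

/-- The Schensted insertion relation: `S = (T ← x)` has shape `g = add(f, r)`. -/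
def Ins (f : ℕ → ℕ) (T : ℕ × ℕ → ℕ) (x : ℕ) (g : ℕ → ℕ) (S : ℕ × ℕ → ℕ) : Prop :=
  ∃ r c xs, InsData f T x r c xs ∧ g = addRow f r ∧ S = insResult T r c xs


section AuxStmt18

lemma RTG_det18 {α : Type*} {Rr : α → α → Prop}
    (hdet : ∀ a b c, Rr a b → Rr a c → b = c) :
    ∀ {a b}, Relation.ReflTransGen Rr a b → ∀ {c}, Relation.ReflTransGen Rr a c →
      (∀ d, ¬ Rr b d) → (∀ d, ¬ Rr c d) → b = c := by
  intro a b hab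
  induction hab using Relation.ReflTransGen.head_induction_on with
  | refl =>
    intro c hac hb _
    rcases hac.cases_head with rfl | ⟨d, hd, _⟩
    · rfl
    · exact absurd hd (hb d)
  | head h hrest ih =>
    intro c hac hb hc
    rcases hac.cases_head with rfl | ⟨d, hd, hdc⟩
    · exact absurd h (hc _)
    · cases hdet _ _ _ h hd; exact ih hdc hb hc

lemma slideStep_det {f : ℕ → ℕ} {a b c : Set (ℕ×ℕ) × ((ℕ×ℕ) → ℕ) × (ℕ×ℕ)}
    (h1 : SlideStep f a b) (h2 : SlideStep f a c) : b = c := by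
  rcases h1 with ⟨hr1, hc1, rfl⟩ | ⟨hd1, hc1, rfl⟩ <;>
    rcases h2 with ⟨hr2, hc2, h⟩ | ⟨hd2, hc2, h⟩
  · exact h.symm
  · exact absurd (hc2 hr1) (not_le.2 (hc1 hd2))
  · exact absurd (hc1 hr2) (not_le.2 (hc2 hd1))
  · exact h.symm

lemma no_slideStep {f : ℕ → ℕ} {H : Set (ℕ×ℕ)} {U : (ℕ×ℕ) → ℕ} {p : ℕ×ℕ}
    (hp : p ∈ H) (h : ¬ Slidable f H p) : ∀ t, ¬ SlideStep f (H, U, p) t := by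
  intro t ht
  apply h
  rcases ht with ⟨hr, _, _⟩ | ⟨hd, _, _⟩
  · exact ⟨hp, Or.inl hr⟩
  · exact ⟨hp, Or.inr hd⟩

lemma slide_hole_mem {f : ℕ → ℕ} {a b : Set (ℕ×ℕ) × ((ℕ×ℕ) → ℕ) × (ℕ×ℕ)}
    (hab : Relation.ReflTransGen (SlideStep f) a b) (ha : a.2.2 ∈ a.1) : b.2.2 ∈ b.1 := by
  induction hab with
  | refl => exact ha
  | tail h hstep ih =>
    rcases hstep with ⟨_, _, rfl⟩ | ⟨_, _, rfl⟩ <;>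
      exact Set.mem_union_right _ rfl

lemma latest_unique {f : ℕ → ℕ} {H : Set (ℕ×ℕ)} {p q : ℕ×ℕ}
    (hp : LatestSlidable f H p) (hq : LatestSlidable f H q) : p = q := by
  have h1 := hp.2 q hq.1
  have h2 := hq.2 p hp.1
  have : p.1 = q.1 ∧ p.2 = q.2 := by omega
  exact Prod.ext this.1 this.2

lemma rectStep_det {f : ℕ → ℕ} {a b c : Set (ℕ×ℕ) × ((ℕ×ℕ) → ℕ)}
    (h1 : RectStep f a b) (h2 : RectStep f a c) : b = c := by
  obtain ⟨p, p', hl, hchain, hterm⟩ := h1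
  obtain ⟨q, q', hl2, hchain2, hterm2⟩ := h2
  cases latest_unique hl hl2
  have hmem : p ∈ a.1 := hl.1.1
  have h3 : ((b.1, b.2, p') : Set (ℕ×ℕ) × ((ℕ×ℕ) → ℕ) × (ℕ×ℕ)) = (c.1, c.2, q') := by
    refine RTG_det18 (Rr := SlideStep f) (fun _ _ _ hx hy => slideStep_det hx hy) hchain hchain2 ?_ ?_
    · exact no_slideStep (slide_hole_mem hchain hmem) hterm
    · exact no_slideStep (slide_hole_mem hchain2 hmem) hterm2
  have hb1 : b.1 = c.1 := congrArg (fun z => z.1) h3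
  have hb2 : b.2 = c.2 := congrArg (fun z => z.2.1) h3
  exact Prod.ext hb1 hb2

lemma no_rectStep {f : ℕ → ℕ} {H : Set (ℕ×ℕ)} {U : (ℕ×ℕ) → ℕ}
    (h : ∀ q, ¬ Slidable f H q) : ∀ t, ¬ RectStep f (H, U) t := by
  rintro t ⟨p, p', hl, -, -⟩
  exact h p hl.1

end AuxStmt18


section AuxStmt18b

lemma insData_unique {f : ℕ → ℕ} {T : ℕ×ℕ → ℕ} {x r r' : ℕ} {c xs c' xs' : ℕ → ℕ}
    (h : InsData f T x r c xs) (h' : InsData f T x r' c' xs') :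
    r = r' ∧ ∀ i, 1 ≤ i → i ≤ r → xs i = xs' i ∧ c i = c' i := by
  obtain ⟨hr1, hx1, hcol, hb, hcr⟩ := h
  obtain ⟨hr1', hx1', hcol', hb', hcr'⟩ := h'
  have ceq : ∀ i, 1 ≤ i → i ≤ r → i ≤ r' → xs i = xs' i → c i = c' i := by
    intro i h1 h2 h3 hx
    obtain ⟨hc1, hc2, hc3, hc4⟩ := hcol i h1 h2
    obtain ⟨hc1', hc2', hc3', hc4'⟩ := hcol' i h1 h3
    rcases lt_trichotomy (c i) (c' i) with hlt | heq | hgt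
    · have h5 : c i ≤ f i := by omega
      have h6 := hc4 h5
      have h7 := hc3' (c i) hc1 hlt
      omega
    · exact heq
    · have h5 : c' i ≤ f i := by omega
      have h6 := hc4' h5
      have h7 := hc3 (c' i) hc1' hgt
      omega
  have key : ∀ i, 1 ≤ i → i ≤ r → i ≤ r' → xs i = xs' i ∧ c i = c' i := by
    intro i
    induction i with
    | zero => omega
    | succ k ih =>
      intro _ h2 h3
      have hxeq : xs (k+1) = xs' (k+1) := by
        rcases Nat.eq_zero_or_pos k with rfl | hk
        · rw [hx1, hx1']
        · obtain ⟨hxk, hck⟩ := ih hk (by omega) (by omega)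
          rw [(hb k hk (by omega)).2, (hb' k hk (by omega)).2, hck]
      exact ⟨hxeq, ceq (k+1) (by omega) h2 h3 hxeq⟩
  have hrr : r = r' := by
    rcases lt_trichotomy r r' with h | h | h
    · exfalso
      have h1 := (hb' r hr1 h).1
      have h2 := (key r hr1 le_rfl (le_of_lt h)).2
      omega
    · exact h
    · exfalso
      have h1 := (hb r' hr1' h).1
      have h2 := (key r' hr1' (le_of_lt h) le_rfl).2
      omega
  exact ⟨hrr, fun i h1 h2 => key i h1 h2 (hrr ▸ h2)⟩

lemma slide_step_lift {f g1 : ℕ → ℕ} {r : ℕ}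
    (hdiff : ∀ H : Set (ℕ×ℕ), cells g1 \ (H ∪ {(r,1)}) = cells f \ H)
    (hrf : ((r:ℕ),1) ∉ cells f)
    {b c : Set (ℕ×ℕ) × ((ℕ×ℕ) → ℕ) × (ℕ×ℕ)}
    (hb : b.1 = {b.2.2}) (hbne : b.2.2 ≠ (r,1))
    (hstep : SlideStep f b c) :
    c.1 = {c.2.2} ∧ c.2.2 ≠ (r,1) ∧
      SlideStep g1 (b.1 ∪ {(r,1)}, b.2.1, b.2.2) (c.1 ∪ {(r,1)}, c.2.1, c.2.2) := by
  obtain ⟨H, U, p⟩ := b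
  simp only at hb hbne
  subst hb
  have hset : ∀ q : ℕ×ℕ, (moveHole {p} U p q).1 = {q} := by
    intro q; simp [moveHole]
  have hset2 : ∀ q : ℕ×ℕ, q ≠ (r,1) →
      (moveHole ({p} ∪ {((r:ℕ),1)}) U p q).1 = (moveHole {p} U p q).1 ∪ {((r:ℕ),1)} := by
    intro q hq
    simp only [moveHole]
    ext z
    simp only [Set.mem_union, Set.mem_diff, Set.mem_singleton_iff]
    constructor
    · rintro (⟨h1 | h1, h2⟩ | h1)
      · exact absurd h1 h2
      · exact Or.inr h1
      · exact Or.inl (Or.inr h1)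
    · rintro ((⟨h1, h2⟩ | h1) | h1)
      · exact absurd h1 h2
      · exact Or.inr h1
      · refine Or.inl ⟨Or.inr h1, ?_⟩
        rintro rfl; exact hbne h1
  rcases hstep with ⟨h1, h2, rfl⟩ | ⟨h1, h2, rfl⟩
  · have hq : (p.1, p.2 + 1) ≠ ((r:ℕ),1) := by
      intro hh
      rw [hh] at h1
      exact hrf h1.1
    refine ⟨hset _, hq, Or.inl ⟨?_, ?_, ?_⟩⟩
    · rw [hdiff]; exact h1
    · intro hmem; rw [hdiff] at hmem; exact h2 hmem
    · simp only
      rw [hset2 _ hq]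
      simp only [moveHole]
  · have hq : (p.1 + 1, p.2) ≠ ((r:ℕ),1) := by
      intro hh
      rw [hh] at h1
      exact hrf h1.1
    refine ⟨hset _, hq, Or.inr ⟨?_, ?_, ?_⟩⟩
    · rw [hdiff]; exact h1
    · intro hmem; rw [hdiff] at hmem; exact h2 hmem
    · simp only
      rw [hset2 _ hq]
      simp only [moveHole]

lemma slide_chain_lift {f g1 : ℕ → ℕ} {r : ℕ}
    (hdiff : ∀ H : Set (ℕ×ℕ), cells g1 \ (H ∪ {(r,1)}) = cells f \ H)
    (hrf : ((r:ℕ),1) ∉ cells f)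
    {a b : Set (ℕ×ℕ) × ((ℕ×ℕ) → ℕ) × (ℕ×ℕ)}
    (hab : Relation.ReflTransGen (SlideStep f) a b)
    (ha : a.1 = {a.2.2}) (hane : a.2.2 ≠ (r,1)) :
    b.1 = {b.2.2} ∧ b.2.2 ≠ (r,1) ∧
      Relation.ReflTransGen (SlideStep g1) (a.1 ∪ {(r,1)}, a.2.1, a.2.2)
        (b.1 ∪ {(r,1)}, b.2.1, b.2.2) := by
  induction hab with
  | refl => exact ⟨ha, hane, Relation.ReflTransGen.refl⟩
  | tail hab hstep ih =>
    obtain ⟨h1, h2, hchain⟩ := ih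
    obtain ⟨h1', h2', hstep'⟩ := slide_step_lift hdiff hrf h1 h2 hstep
    exact ⟨h1', h2', hchain.tail hstep'⟩

end AuxStmt18b


section AuxStmt18c

noncomputable def auxU (V T : ℕ × ℕ → ℕ) (s i : ℕ) : ℕ × ℕ → ℕ :=
  fun p => if (p.1 = s - 1 ∧ p.2 = 1) ∨ (p.1 = i ∧ p.2 = 1) then 0
    else if s ≤ p.1 ∧ p.1 < i ∧ p.2 = 1 then T p else V p

lemma auxU_step {g1 : ℕ → ℕ} {T V : ℕ×ℕ → ℕ} {xs : ℕ → ℕ} {s r i : ℕ}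
    (hs2 : 2 ≤ s) (hsi : s ≤ i) (hir : i < r)
    (hg1pos : ∀ j, 1 ≤ j → j ≤ r → 1 ≤ g1 j)
    (hVcol : ∀ j, s ≤ j → j ≤ r → V (j,1) = xs j)
    (hxsT : ∀ j, s ≤ j → j < r → xs (j+1) = T (j,1))
    (hVright : ∀ j, s ≤ j → j < r → V (j,2) = T (j,2))
    (hrow : ∀ j, s ≤ j → j < r → 2 ≤ g1 j → T (j,1) ≤ T (j,2)) :
    SlideStep g1 (({((s:ℕ)-1,1),(i,1)} : Set (ℕ×ℕ)), auxU V T s i, ((i:ℕ),1))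
      (({((s:ℕ)-1,1),((i:ℕ)+1,1)} : Set (ℕ×ℕ)), auxU V T s (i+1), ((i:ℕ)+1,1)) := by
  have l1 : auxU V T s i (i+1,1) = T (i,1) := by
    simp only [auxU]
    rw [if_neg (by simp <;> omega), if_neg (by simp <;> omega),
      hVcol (i+1) (by omega) (by omega), hxsT i hsi hir]
  have l2 : auxU V T s i (i,2) = V (i,2) := by
    simp only [auxU]
    rw [if_neg (by simp <;> omega), if_neg (by simp <;> omega)]
  refine Or.inr ⟨?_, ?_, ?_⟩
  · refine ⟨⟨by simp, by simp, ?_⟩, ?_⟩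
    · exact hg1pos (i+1) (by omega) (by omega)
    · dsimp only
      rintro (h | h) <;> (have := congrArg Prod.fst h; simp at this <;> omega)
  · intro hmem
    have h2 : 2 ≤ g1 i := hmem.1.2.2
    show auxU V T s i (i+1,1) ≤ auxU V T s i (i,2)
    rw [l1, l2, hVright i hsi hir]
    exact hrow i hsi hir h2
  · show _ = ((moveHole ({((s:ℕ)-1,1),(i,1)} : Set (ℕ×ℕ)) (auxU V T s i) ((i:ℕ),1) ((i:ℕ)+1,1)).1,
      (moveHole ({((s:ℕ)-1,1),(i,1)} : Set (ℕ×ℕ)) (auxU V T s i) ((i:ℕ),1) ((i:ℕ)+1,1)).2,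
      ((i:ℕ)+1,(1:ℕ)))
    have hset : (moveHole ({((s:ℕ)-1,1),(i,1)} : Set (ℕ×ℕ)) (auxU V T s i) ((i:ℕ),1) ((i:ℕ)+1,1)).1
        = ({((s:ℕ)-1,1),((i:ℕ)+1,1)} : Set (ℕ×ℕ)) := by
      simp only [moveHole]
      ext ⟨z1, z2⟩
      simp only [Set.mem_union, Set.mem_diff, Set.mem_insert_iff, Set.mem_singleton_iff,
        Prod.mk.injEq]
      omega
    have hfun : (moveHole ({((s:ℕ)-1,1),(i,1)} : Set (ℕ×ℕ)) (auxU V T s i) ((i:ℕ),1) ((i:ℕ)+1,1)).2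
        = auxU V T s (i+1) := by
      simp only [moveHole]
      funext p
      obtain ⟨p1, p2⟩ := p
      rw [Function.update_apply, Function.update_apply, l1]
      by_cases hA : ((p1, p2) : ℕ×ℕ) = ((i:ℕ)+1, (1:ℕ))
      · rw [if_pos hA]
        injection hA with e1 e2
        subst e1; subst e2
        simp [auxU]
      · rw [if_neg hA]
        by_cases hB : ((p1, p2) : ℕ×ℕ) = ((i:ℕ), (1:ℕ))
        · rw [if_pos hB]
          injection hB with e1 e2
          subst e1; subst e2
          simp only [auxU]
          rw [if_neg (by simp <;> omega), if_pos (by simp <;> omega)]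
        · rw [if_neg hB]
          have hA' : ¬ (p1 = i + 1 ∧ p2 = 1) := fun h => hA (by rw [h.1, h.2])
          have hB' : ¬ (p1 = i ∧ p2 = 1) := fun h => hB (by rw [h.1, h.2])
          simp only [auxU]
          split_ifs <;> first | rfl | (exfalso; omega)
    rw [hset, hfun]

end AuxStmt18c

theorem stmt18 (n : ℕ) (f : ℕ → ℕ) (hf : IsPartitionF f) (hfn : ∀ i, n < i → f i = 0)
    (T : ℕ × ℕ → ℕ) (hT : Symp f T) (hTe : EntriesLE f T (2 * n))
    (x : ℕ) (hx : 1 ≤ x ∧ x ≤ 2 * n)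
    (g1 : ℕ → ℕ) (T' : ℕ × ℕ → ℕ) (hins : Ins f T x g1 T')
    (hns : ¬ Symp g1 T')
    (s : ℕ) (hs1 : 1 ≤ s) (hsf : 1 ≤ g1 s) (hsx : T' (s, 1) < 2 * s - 1)
    (hmin : ∀ i, 1 ≤ i → i < s → 2 * i - 1 ≤ T' (i, 1))
    -- `T''` : replace the `(s-1,1)`- and `(s,1)`-entries of `T'` with holes
    (T'' : ℕ × ℕ → ℕ)
    (hT'' : T'' = fun p => if p = ((s : ℕ) - 1, 1) ∨ p = (s, 1) then 0 else T' p)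
    (H' : Set (ℕ × ℕ)) (R : ℕ × ℕ → ℕ)
    (hrect : Relation.ReflTransGen (RectStep g1) ({((s : ℕ) - 1, 1), (s, 1)}, T'') (H', R))
    (hterm : ∀ q, ¬ Slidable g1 H' q)
    (g3 : ℕ → ℕ) (S3 : ℕ × ℕ → ℕ) (hber : Berele f T x g3 S3) :
    S3 = R := by
  classical
  obtain ⟨r, c, xs, hID, hg1def, hT'def⟩ := hins
  obtain ⟨⟨⟨hT0, hTpos⟩, hTrow, hTcol⟩, hTsymp⟩ := hT
  obtain ⟨hmono, -⟩ := hf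
  have hr1 : 1 ≤ r := hID.1
  have hxs1 : xs 1 = x := hID.2.1
  have hcol := hID.2.2.1
  have hbump := hID.2.2.2.1
  have hcr : c r = f r + 1 := hID.2.2.2.2
  have hfpos : ∀ i, 1 ≤ i → i < r → 1 ≤ f i := fun i h1 h2 =>
    le_trans (hcol i h1 (le_of_lt h2)).1 (hbump i h1 h2).1
  have memf : ∀ a b : ℕ, 1 ≤ a → 1 ≤ b → b ≤ f a →
      ((a,b) : ℕ×ℕ) ∈ cells f \ (∅ : Set (ℕ×ℕ)) :=
    fun a b h1 h2 h3 => ⟨⟨h1, h2, h3⟩, Set.notMem_empty _⟩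
  have hT'v : ∀ a b : ℕ, T' (a,b) = if 1 ≤ a ∧ a ≤ r ∧ b = c a then xs a else T (a,b) := by
    intro a b; rw [hT'def]; rfl
  -- s ≤ r
  have hsr : s ≤ r := by
    by_contra hgt
    push_neg at hgt
    have e1 : T' (s,1) = T (s,1) := by
      rw [hT'v]; rw [if_neg]; rintro ⟨-, h, -⟩; omega
    have e2 : g1 s = f s := by rw [hg1def, addRow, Function.update_of_ne (by omega)]
    have e3 : 1 ≤ f s := by omega
    have := hTsymp s hs1 e3
    omega
  -- c s = 1
  have hcs : c s = 1 := by
    have h1 := (hcol s hs1 hsr).1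
    by_contra hne
    have h2 : 2 ≤ c s := by omega
    have e1 : T' (s,1) = T (s,1) := by
      rw [hT'v]; rw [if_neg]; rintro ⟨-, -, h⟩; omega
    have e3 : 1 ≤ f s := by have := (hcol s hs1 hsr).2.1; omega
    have := hTsymp s hs1 e3
    omega
  have hxss : xs s < 2*s - 1 := by
    have e : T' (s,1) = xs s := by rw [hT'v]; rw [if_pos ⟨hs1, hsr, hcs.symm⟩]
    omega
  -- s ≥ 2
  have hs2 : 2 ≤ s := by
    by_contra h
    have hs1' : s = 1 := by omega
    subst hs1'
    have e : T' (1,1) = xs 1 := by rw [hT'v]; rw [if_pos ⟨le_rfl, hr1, hcs.symm⟩]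
    rw [hxs1] at e
    omega
  -- symplectic bounds on the inserted letters below s
  have hxslow : ∀ i, 1 ≤ i → i < s → 2*i - 1 ≤ xs i := by
    intro i h1 h2
    have hir : i ≤ r := by omega
    have hmini := hmin i h1 h2
    by_cases hc1 : c i = 1
    · have e : T' (i,1) = xs i := by rw [hT'v]; rw [if_pos ⟨h1, hir, hc1.symm⟩]
      omega
    · have e1 : T' (i,1) = T (i,1) := by
        rw [hT'v]; rw [if_neg]; rintro ⟨-, -, h⟩; exact hc1 h.symm
      have h2c := (hcol i h1 hir).1
      have hle := (hcol i h1 hir).2.2.1 1 le_rfl (by omega)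
      omega
  -- the bumping route stays in column 1 from row s on
  have hcone : ∀ i, s ≤ i → i ≤ r → c i = 1 := by
    intro i hi
    induction i, hi using Nat.le_induction with
    | base => intro _; exact hcs
    | succ i hi ih =>
      intro hir
      have hci : c i = 1 := ih (by omega)
      have hxsi : xs (i+1) = T (i,1) := by
        have := (hbump i (by omega) (by omega)).2; rwa [hci] at this
      by_contra hne
      have h1 : 1 ≤ c (i+1) := (hcol (i+1) (by omega) hir).1
      have h2 : c (i+1) ≤ f (i+1) + 1 := (hcol (i+1) (by omega) hir).2.1
      have hf1 : 1 ≤ f (i+1) := by omega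
      have hle : T (i+1,1) ≤ xs (i+1) := (hcol (i+1) (by omega) hir).2.2.1 1 le_rfl (by omega)
      have hmem1 : ((i:ℕ),1) ∈ cells f \ (∅ : Set (ℕ×ℕ)) := by
        refine memf i 1 (by omega) le_rfl ?_
        have := hmono i (i+1) (by omega) (by omega)
        omega
      have hmem2 : ((i:ℕ)+1,1) ∈ cells f \ (∅ : Set (ℕ×ℕ)) := memf (i+1) 1 (by omega) le_rfl hf1
      have := hTcol i (i+1) 1 hmem1 hmem2 (by omega)
      omega
  have hxsT : ∀ j, s ≤ j → j < r → xs (j+1) = T (j,1) := by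
    intro j h1 h2
    have := (hbump j (by omega) h2).2
    rwa [hcone j h1 (by omega)] at this
  have hfr0 : f r = 0 := by
    have := hcone r hsr le_rfl; omega
  have hg1r : g1 r = 1 := by
    rw [hg1def]; simp [addRow, hfr0]
  have hg1ne : ∀ j, j ≠ r → g1 j = f j := by
    intro j hj; rw [hg1def, addRow, Function.update_of_ne hj]
  have hg1pos : ∀ j, 1 ≤ j → j ≤ r → 1 ≤ g1 j := by
    intro j h1 h2
    rcases eq_or_lt_of_le h2 with rfl | hlt
    · omega
    · rw [hg1ne j (by omega)]; exact hfpos j h1 hlt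
  have hrf : ((r:ℕ),1) ∉ cells f := by
    intro h
    have h3 : 1 ≤ f r := h.2.2
    omega
  have hcells : cells g1 = cells f ∪ {((r:ℕ),1)} := by
    ext ⟨z1, z2⟩
    simp only [Set.mem_union, Set.mem_singleton_iff, Prod.mk.injEq]
    show (1 ≤ z1 ∧ 1 ≤ z2 ∧ z2 ≤ g1 z1) ↔ (1 ≤ z1 ∧ 1 ≤ z2 ∧ z2 ≤ f z1) ∨ (z1 = r ∧ z2 = 1)
    rcases eq_or_ne z1 r with rfl | hz
    · rw [hg1r, hfr0]; omega
    · rw [hg1ne z1 hz]; omega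
  have hdiff : ∀ Hs : Set (ℕ×ℕ), cells g1 \ (Hs ∪ {((r:ℕ),1)}) = cells f \ Hs := by
    intro Hs
    rw [hcells]
    ext z
    simp only [Set.mem_diff, Set.mem_union, Set.mem_singleton_iff]
    constructor
    · rintro ⟨hz | rfl, hz2⟩
      · exact ⟨hz, fun h => hz2 (Or.inl h)⟩
      · exact absurd (Or.inr rfl) hz2
    · rintro ⟨hz, hz2⟩
      refine ⟨Or.inl hz, ?_⟩
      rintro (h | rfl)
      · exact hz2 h
      · exact hrf hz
  have hnoslide_r1 : ∀ Hs : Set (ℕ×ℕ), ¬ Slidable g1 Hs ((r:ℕ),1) := by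
    rintro Hs ⟨-, h | h⟩
    · have h2 : (1:ℕ)+1 ≤ g1 r := h.1.2.2
      omega
    · have h3 : (1:ℕ) ≤ g1 (r+1) := h.1.2.2
      have h4 : g1 (r+1) = f (r+1) := hg1ne _ (by omega)
      have h5 : f (r+1) ≤ f r := hmono r (r+1) hr1 (by omega)
      omega
  -- T'' is the initial auxiliary tableau
  have hT''v : T'' = auxU T' T s s := by
    rw [hT'']
    funext p
    obtain ⟨p1, p2⟩ := p
    simp only [auxU, Prod.mk.injEq]
    split_ifs <;> first | rfl | (exfalso; omega)
  have hTr10 : T ((r:ℕ),1) = 0 := hT0 _ (fun hp => hrf hp.1)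
  -- the final auxiliary tableau is the Berele mid-tableau
  have hbmv : auxU T' T s r = bereleMid T s c xs := by
    funext p
    obtain ⟨p1, p2⟩ := p
    simp only [auxU, bereleMid, Prod.mk.injEq]
    by_cases hA : p1 = s - 1 ∧ p2 = 1
    · rw [if_pos (Or.inl hA), if_pos hA]
    · by_cases hR : p1 = r ∧ p2 = 1
      · obtain ⟨rfl, rfl⟩ := hR
        rw [if_pos (Or.inr ⟨rfl, rfl⟩), if_neg hA, if_neg, hTr10]
        rintro ⟨-, h, -⟩; omega
      · have hor : ¬ ((p1 = s - 1 ∧ p2 = 1) ∨ (p1 = r ∧ p2 = 1)) := by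
          rintro (h | h)
          · exact hA h
          · exact hR h
        rw [if_neg hor, if_neg hA]
        by_cases hD : 1 ≤ p1 ∧ p1 + 1 ≤ s ∧ p2 = c p1
        · rw [if_pos hD, if_neg, hT'v, if_pos ⟨hD.1, by omega, hD.2.2⟩]
          rintro ⟨h, -, -⟩; omega
        · rw [if_neg hD]
          by_cases hB : s ≤ p1 ∧ p1 < r ∧ p2 = 1
          · rw [if_pos hB]
          · rw [if_neg hB, hT'v, if_neg]
            rintro ⟨h1, h2, h3⟩
            by_cases hps : p1 < s
            · exact hD ⟨h1, by omega, h3⟩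
            · have hc1 := hcone p1 (by omega) h2
              have h4 : p2 = 1 := by rw [h3, hc1]
              have h5 : ¬ p1 < r := fun hlt => hB ⟨by omega, hlt, h4⟩
              exact hR ⟨by omega, h4⟩
  -- values of T' needed for phase 1
  have hVcol : ∀ j, s ≤ j → j ≤ r → T' (j,1) = xs j := by
    intro j h1 h2
    rw [hT'v]; rw [if_pos ⟨by omega, h2, (hcone j h1 h2).symm⟩]
  have hVright : ∀ j, s ≤ j → j < r → T' (j,2) = T (j,2) := by
    intro j h1 h2
    rw [hT'v]; rw [if_neg]
    rintro ⟨-, -, h⟩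
    have := hcone j h1 (by omega)
    omega
  have hrow : ∀ j, s ≤ j → j < r → 2 ≤ g1 j → T (j,1) ≤ T (j,2) := by
    intro j h1 h2 h3
    rw [hg1ne j (by omega)] at h3
    exact hTrow j 1 2 (memf j 1 (by omega) le_rfl (by omega))
      (memf j 2 (by omega) (by omega) h3) (by omega)
  -- phase 1 : the slide at (s,1) moves straight down column 1
  have hchain1 : ∀ k, s ≤ k → k ≤ r →
      Relation.ReflTransGen (SlideStep g1)
        (({((s:ℕ)-1,1),((s:ℕ),1)} : Set (ℕ×ℕ)), auxU T' T s s, ((s:ℕ),1))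
        (({((s:ℕ)-1,1),(k,1)} : Set (ℕ×ℕ)), auxU T' T s k, ((k:ℕ),1)) := by
    intro k hk
    induction k, hk using Nat.le_induction with
    | base => intro _; exact Relation.ReflTransGen.refl
    | succ k hk ih =>
      intro hk2
      exact (ih (by omega)).tail
        (auxU_step hs2 hk (by omega) hg1pos hVcol hxsT hVright hrow)
  -- first rectification step (or none, when s = r)
  have hrtg1 : Relation.ReflTransGen (RectStep g1)
      ({((s:ℕ)-1,1),((s:ℕ),1)}, T'') ({((s:ℕ)-1,1),((r:ℕ),1)}, bereleMid T s c xs) := by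
    rcases eq_or_lt_of_le hsr with rfl | hlt
    · rw [hT''v, hbmv]
    · refine Relation.ReflTransGen.single ⟨((s:ℕ),1), ((r:ℕ),1), ?_, ?_, hnoslide_r1 _⟩
      · refine ⟨⟨Set.mem_insert_iff.2 (Or.inr rfl), Or.inr ⟨?_, ?_⟩⟩, ?_⟩
        · exact ⟨by omega, le_rfl, hg1pos (s+1) (by omega) (by omega)⟩
        · intro h
          rcases Set.mem_insert_iff.1 h with h1 | h1
          · have := congrArg Prod.fst h1; simp at this <;> omega
          · have := congrArg Prod.fst (Set.mem_singleton_iff.1 h1)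
            simp at this <;> omega
        · intro q hq
          rcases Set.mem_insert_iff.1 hq.1 with rfl | hq2
          · exact Or.inl (show s - 1 < s by omega)
          · rw [Set.mem_singleton_iff.1 hq2]
            exact Or.inr ⟨rfl, le_rfl⟩
      · show Relation.ReflTransGen (SlideStep g1)
          (({((s:ℕ)-1,1),((s:ℕ),1)} : Set (ℕ×ℕ)), T'', ((s:ℕ),1))
          (({((s:ℕ)-1,1),((r:ℕ),1)} : Set (ℕ×ℕ)), bereleMid T s c xs, ((r:ℕ),1))
        rw [hT''v, ← hbmv]
        exact hchain1 r hsr le_rfl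
  -- now analyse the Berele insertion
  obtain ⟨ρ, r₂, c₂, xs₂, hID₂, hcase⟩ := hber
  obtain ⟨hrr, hagree⟩ := insData_unique hID hID₂
  subst hrr
  rcases hcase with ⟨hA, -, -, -⟩ | ⟨s₂, hs₂1, hs₂r, hxs₂s, hmin₂, HB, p', hchainB, hnsB, -, -⟩
  · exfalso
    have h1 := hA s hs1 hsr
    have h2 := (hagree s hs1 hsr).1
    omega
  · have hs₂eq : s₂ = s := by
      rcases lt_trichotomy s₂ s with h | h | h
      · have h1 := hxslow s₂ hs₂1 h
        have h2 := (hagree s₂ hs₂1 hs₂r).1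
        omega
      · exact h
      · have h1 := hmin₂ s hs1 h
        have h2 := (hagree s hs1 hsr).1
        omega
    rw [hs₂eq] at hchainB
    have hbm2 : bereleMid T s c₂ xs₂ = bereleMid T s c xs := by
      funext p
      simp only [bereleMid]
      by_cases h0 : p = ((s:ℕ)-1, 1)
      · rw [if_pos h0, if_pos h0]
      · rw [if_neg h0, if_neg h0]
        by_cases h1 : 1 ≤ p.1 ∧ p.1 + 1 ≤ s ∧ p.2 = c₂ p.1
        · have hag := hagree p.1 h1.1 (by omega)
          rw [if_pos h1, if_pos ⟨h1.1, h1.2.1, by rw [hag.2]; exact h1.2.2⟩]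
          exact hag.1.symm
        · have h1' : ¬ (1 ≤ p.1 ∧ p.1 + 1 ≤ s ∧ p.2 = c p.1) := by
            rintro ⟨g1', g2, g3⟩
            exact h1 ⟨g1', g2, g3.trans (hagree p.1 g1' (by omega)).2⟩
          rw [if_neg h1, if_neg h1']
    rw [hbm2] at hchainB
    obtain ⟨hHB, hp'ne, hchainL⟩ := slide_chain_lift hdiff hrf hchainB rfl
      (fun h => by have := congrArg Prod.fst h; simp at this <;> omega)
    have hHB' : HB = {p'} := hHB
    dsimp only at hchainL
    rw [Set.singleton_union, hHB', Set.singleton_union] at hchainL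
    have hnsB2 : ¬ Slidable f HB p' := hnsB
    have hnsB' : ¬ Slidable g1 ({p', ((r:ℕ),1)} : Set (ℕ×ℕ)) p' := by
      rintro ⟨-, h⟩
      apply hnsB2
      rw [hHB']
      refine ⟨rfl, ?_⟩
      rw [← Set.singleton_union, hdiff] at h
      exact h
    have hFterm : ∀ t, ¬ RectStep g1 (({p', ((r:ℕ),1)} : Set (ℕ×ℕ)), S3) t := by
      apply no_rectStep
      intro q hq
      rcases Set.mem_insert_iff.1 hq.1 with rfl | hq2
      · exact hnsB' hq
      · rw [Set.mem_singleton_iff.1 hq2] at hq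
        exact hnoslide_r1 _ hq
    have hrtg2 : Relation.ReflTransGen (RectStep g1)
        ({((s:ℕ)-1,1),((r:ℕ),1)}, bereleMid T s c xs) ({p', ((r:ℕ),1)}, S3) := by
      rcases hchainB.cases_head with heq | ⟨mid, hstep1, -⟩
      · have e2 : bereleMid T s c xs = S3 := congrArg (fun z => z.2.1) heq
        have e3 : ((s:ℕ)-1,1) = p' := congrArg (fun z => z.2.2) heq
        rw [← e2, ← e3]
      · refine Relation.ReflTransGen.single ⟨((s:ℕ)-1,1), p', ?_, ?_, hnsB'⟩
        · have hsl : Slidable f ({((s:ℕ)-1,1)} : Set (ℕ×ℕ)) ((s:ℕ)-1,1) := by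
            rcases hstep1 with ⟨h1, -, -⟩ | ⟨h1, -, -⟩
            · exact ⟨rfl, Or.inl h1⟩
            · exact ⟨rfl, Or.inr h1⟩
          refine ⟨⟨Set.mem_insert _ _, ?_⟩, ?_⟩
          · rcases hsl.2 with h | h
            · left; rw [← Set.singleton_union, hdiff]; exact h
            · right; rw [← Set.singleton_union, hdiff]; exact h
          · intro q hq
            rcases Set.mem_insert_iff.1 hq.1 with rfl | hq2
            · exact Or.inr ⟨rfl, le_rfl⟩
            · exfalso
              rw [Set.mem_singleton_iff.1 hq2] at hq
              exact hnoslide_r1 _ hq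
        · exact hchainL
    have hfin := RTG_det18 (Rr := RectStep g1) (fun _ _ _ h1 h2 => rectStep_det h1 h2)
      hrect (hrtg1.trans hrtg2) (no_rectStep hterm) hFterm
    exact (congrArg Prod.snd hfin).symm
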